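/- Let n ≥ 2 be an integer, M > 0, and r_h = (2M)^{1/(n−1)}. Suppose u : (r_h, ∞) → ℝ is differentiable and satisfies ( 1 − 2M/r^{n−1} ) u′(r) + r^{−1} ( 1 + (n−1)(1 − 2M/r^{n−1}) ) u(r) = 0 for all r > r_h. Then there exists a constant d ∈ ℝ such that u(r) = d · (2M/r^{n−1}) · r^{−1} · ( 1 − 2M/r^{n−1} )^{−1/(n−1)} for all r > r_h. -/

import Mathlib

open Set

/-!
Write `k = n - 1` and `F r = 1 - 2M/r^k`. Dividing by `F > 0`, the equation reads `u' + p u = 0`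
with `p = (1 + k F)/(r F)`, and `φ r = r^(k+1) F(r)^(1/k)` is an integrating factor: `φ' = p φ`
because `F' = 2Mk/r^(k+1) = k (1 - F)/r`. So `u φ` is constant on the connected exterior, and
`1/φ = (2M/r^k) r⁻¹ F^(-1/k) / (2M)` is the claimed profile.
-/

theorem exists_mul_eq_const_of_deriv_add_mul_eq_zero {s : Set ℝ} (hs : IsOpen s)
    (hs' : IsPreconnected s) {u φ p : ℝ → ℝ} (hu : ∀ r ∈ s, DifferentiableAt ℝ u r)
    (hφ : ∀ r ∈ s, HasDerivAt φ (p r * φ r) r) (hode : ∀ r ∈ s, deriv u r + p r * u r = 0) :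
    ∃ C, ∀ r ∈ s, u r * φ r = C := by
  have hderiv : ∀ r ∈ s, HasDerivAt (fun r => u r * φ r) 0 r := fun r hr =>
    ((hu r hr).hasDerivAt.mul (hφ r hr)).congr_deriv (by linear_combination φ r * hode r hr)
  exact hs.exists_is_const_of_deriv_eq_zero hs'
    (fun r hr => (hderiv r hr).differentiableAt.differentiableWithinAt)
    (fun r hr => (hderiv r hr).deriv)

section Exterior

variable {M : ℝ} {k : ℕ} {r : ℝ}

theorem pos_of_mem_exterior (hM : 0 ≤ M) (hr : r ∈ Ioi ((2 * M) ^ ((1 : ℝ) / k))) : 0 < r :=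
  (Real.rpow_nonneg (by positivity) _).trans_lt hr

theorem one_sub_div_pow_pos_of_mem_exterior (hM : 0 ≤ M) (hk : k ≠ 0)
    (hr : r ∈ Ioi ((2 * M) ^ ((1 : ℝ) / k))) : 0 < 1 - 2 * M / r ^ k := by
  have hpow : 2 * M < r ^ k :=
    calc 2 * M = ((2 * M) ^ ((1 : ℝ) / k)) ^ k := by
          rw [one_div, Real.rpow_inv_natCast_pow (by positivity) hk]
      _ < r ^ k := pow_lt_pow_left₀ hr (Real.rpow_nonneg (by positivity) _) hk
  have := pos_of_mem_exterior hM hr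
  rw [sub_pos, div_lt_one (by positivity)]
  exact hpow

theorem hasDerivAt_one_sub_div_pow (hk : k ≠ 0) (hr : 0 < r) :
    HasDerivAt (fun r => 1 - 2 * M / r ^ k) (2 * M * k / r ^ (k + 1)) r := by
  refine ((hasDerivAt_const r (1 : ℝ)).sub
    ((hasDerivAt_const r (2 * M)).div (hasDerivAt_pow k r) (by positivity))).congr_deriv ?_
  obtain ⟨j, rfl⟩ : ∃ j, k = j + 1 := ⟨k - 1, by omega⟩
  simp only [Nat.add_sub_cancel]
  field_simp
  ring

theorem hasDerivAt_integratingFactor (hk : k ≠ 0) (hr : 0 < r) (hF : 0 < 1 - 2 * M / r ^ k) :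
    HasDerivAt (fun r => r ^ (k + 1) * (1 - 2 * M / r ^ k) ^ ((1 : ℝ) / k))
      ((1 + k * (1 - 2 * M / r ^ k)) / (r * (1 - 2 * M / r ^ k))
        * (r ^ (k + 1) * (1 - 2 * M / r ^ k) ^ ((1 : ℝ) / k))) r := by
  refine ((hasDerivAt_pow (k + 1) r).mul
    ((hasDerivAt_one_sub_div_pow hk hr).rpow_const (Or.inl hF.ne'))).congr_deriv ?_
  rw [Real.rpow_sub_one hF.ne', Nat.add_sub_cancel]
  have h2M : 2 * M = (1 - (1 - 2 * M / r ^ k)) * r ^ k := by field_simp; ring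
  generalize 1 - 2 * M / r ^ k = F at hF h2M ⊢
  rw [h2M]
  have hk' : (k : ℝ) ≠ 0 := Nat.cast_ne_zero.mpr hk
  field_simp
  push_cast
  ring

end Exterior

theorem l_one_scalar_mode_ode_solution
    (n : ℕ) (hn : 2 ≤ n) (M : ℝ) (hM : 0 < M)
    (u : ℝ → ℝ)
    (hdiff : ∀ r ∈ Ioi ((2*M) ^ ((1:ℝ)/((n:ℝ)-1))), DifferentiableAt ℝ u r)
    (hode : ∀ r ∈ Ioi ((2*M) ^ ((1:ℝ)/((n:ℝ)-1))),
      (1 - 2*M/r^(n-1)) * deriv u r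
        + r⁻¹ * (1 + ((n:ℝ)-1)*(1 - 2*M/r^(n-1))) * u r = 0) :
    ∃ d : ℝ, ∀ r ∈ Ioi ((2*M) ^ ((1:ℝ)/((n:ℝ)-1))),
      u r = d * (2*M/r^(n-1)) * r⁻¹ * (1 - 2*M/r^(n-1)) ^ (-(1:ℝ)/((n:ℝ)-1)) := by
  obtain ⟨k, rfl⟩ : ∃ k, n = k + 1 := ⟨n - 1, by omega⟩
  have hk : k ≠ 0 := by omega
  simp only [Nat.cast_add, Nat.cast_one, add_sub_cancel_right, Nat.add_sub_cancel] at hdiff hode ⊢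
  have hr0 := fun r (hr : r ∈ _) => pos_of_mem_exterior hM.le (k := k) hr
  have hF := fun r (hr : r ∈ _) => one_sub_div_pow_pos_of_mem_exterior hM.le hk (r := r) hr
  have hode' : ∀ r ∈ Ioi ((2 * M) ^ ((1 : ℝ) / k)),
      deriv u r + (1 + k * (1 - 2 * M / r ^ k)) / (r * (1 - 2 * M / r ^ k)) * u r = 0 := by
    intro r hr
    have h := hode r hr
    have hFr := hF r hr
    generalize 1 - 2 * M / r ^ k = F at h hFr ⊢
    field_simp [(hr0 r hr).ne', hFr.ne'] at h ⊢
    linear_combination h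
  obtain ⟨C, hC⟩ := exists_mul_eq_const_of_deriv_add_mul_eq_zero isOpen_Ioi isPreconnected_Ioi
    hdiff (fun r hr => hasDerivAt_integratingFactor hk (hr0 r hr) (hF r hr)) hode'
  refine ⟨C / (2 * M), fun r hr => ?_⟩
  rw [neg_div, Real.rpow_neg (hF r hr).le, ← hC r hr]
  have hφ := (Real.rpow_pos_of_pos (hF r hr) ((1 : ℝ) / k)).ne'
  generalize (1 - 2 * M / r ^ k) ^ ((1 : ℝ) / k) = G at hφ ⊢
  field_simp [(hr0 r hr).ne']
  ring
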